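/- Let f : ℝⁿ → ℝ be convex and differentiable with L-Lipschitz gradient, g : ℝⁿ → ℝ ∪ {+∞} proper closed convex, and F = f + g. For any y and any L_s ≥ L, let x⁺ = argmin_x [f(y) + ⟨∇f(y), x − y⟩ + (L_s/2)‖x − y‖² + g(x)]. Then for every z, F(z) − F(x⁺) ≥ (L_s/2)‖x⁺ − y‖² + L_s⟨y − z, x⁺ − y⟩. -/

import Mathlib

/-!
The model `Q x = f y + ⟪∇f y, x - y⟫ + (Ls/2)‖x - y‖²` is `Ls`-strongly convex, so `Q + g`
grows quadratically away from its minimizer: `Q x⁺ + g x⁺ + (Ls/2)‖z - x⁺‖² ≤ Q z + g z`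
(compare `x⁺` with the points of the segment `[x⁺, z]` and let them tend to `x⁺`).
Since `Ls ≥ L`, the descent lemma gives `f x⁺ ≤ Q x⁺`, and convexity of `f` gives
`Q z ≤ f z + (Ls/2)‖z - y‖²`; expanding `‖z - x⁺‖² = ‖(z - y) - (x⁺ - y)‖²` turns the three
inequalities into the claim.
-/

open RealInnerProductSpace Set AffineMap Filter Topology

section Gradient

variable {E : Type*} [NormedAddCommGroup E] [InnerProductSpace ℝ E] [CompleteSpace E]
  {f : E → ℝ}

theorem HasGradientAt.hasDerivAt_comp_lineMap {f' a b : E} {t : ℝ}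
    (hf : HasGradientAt f f' (lineMap a b t)) :
    HasDerivAt (f ∘ (lineMap a b : ℝ →ᵃ[ℝ] E)) ⟪f', b - a⟫ t := by
  simpa using hf.hasFDerivAt.comp_hasDerivAt t hasDerivAt_lineMap

theorem ConvexOn.add_inner_le_of_hasGradientAt {f' a : E} (hconv : ConvexOn ℝ univ f)
    (hf : HasGradientAt f f' a) (b : E) :
    f a + ⟪f', b - a⟫ ≤ f b := by
  have hline : ConvexOn ℝ univ (f ∘ (lineMap a b : ℝ →ᵃ[ℝ] E)) :=
    hconv.comp_affineMap (lineMap a b)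
  have hderiv : HasDerivAt (f ∘ (lineMap a b : ℝ →ᵃ[ℝ] E)) ⟪f', b - a⟫ 0 :=
    HasGradientAt.hasDerivAt_comp_lineMap (by rwa [lineMap_apply_zero])
  have := hline.le_slope_of_hasDerivAt (mem_univ 0) (mem_univ 1) one_pos hderiv
  simp only [slope_def_field, Function.comp_apply, lineMap_apply_zero, lineMap_apply_one,
    sub_zero, div_one] at this
  linarith

theorem le_add_inner_add_of_lipschitz_gradient {f' : E → E} {L : ℝ}
    (hf : ∀ x, HasGradientAt f (f' x) x) (hlip : ∀ x y, ‖f' x - f' y‖ ≤ L * ‖x - y‖)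
    (a b : E) :
    f b ≤ f a + ⟪f' a, b - a⟫ + L / 2 * ‖b - a‖ ^ 2 := by
  set ψ : ℝ → ℝ :=
    fun t ↦ f (lineMap a b t) - t * ⟪f' a, b - a⟫ - L / 2 * t ^ 2 * ‖b - a‖ ^ 2
  have hψ' : ∀ t, HasDerivAt ψ
      (⟪f' (lineMap a b t), b - a⟫ - ⟪f' a, b - a⟫ - L * t * ‖b - a‖ ^ 2) t := by
    intro t
    have hline : HasDerivAt (f ∘ (lineMap a b : ℝ →ᵃ[ℝ] E)) ⟪f' (lineMap a b t), b - a⟫ t :=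
      (hf _).hasDerivAt_comp_lineMap
    have hquad := ((hasDerivAt_pow 2 t).const_mul (L / 2)).mul_const (‖b - a‖ ^ 2)
    exact ((hline.sub ((hasDerivAt_id' t).mul_const _)).sub hquad).congr_deriv (by ring)
  have hψ'_nonpos : ∀ t ∈ Ioo (0 : ℝ) 1,
      ⟪f' (lineMap a b t), b - a⟫ - ⟪f' a, b - a⟫ - L * t * ‖b - a‖ ^ 2 ≤ 0 := by
    intro t ht
    have hdist : ‖lineMap a b t - a‖ = t * ‖b - a‖ := by
      rw [← vsub_eq_sub, lineMap_vsub_left, norm_smul, Real.norm_of_nonneg ht.1.le, vsub_eq_sub]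
    calc ⟪f' (lineMap a b t), b - a⟫ - ⟪f' a, b - a⟫ - L * t * ‖b - a‖ ^ 2
        = ⟪f' (lineMap a b t) - f' a, b - a⟫ - L * t * ‖b - a‖ ^ 2 := by rw [inner_sub_left]
      _ ≤ ‖f' (lineMap a b t) - f' a‖ * ‖b - a‖ - L * t * ‖b - a‖ ^ 2 := by
        gcongr; exact real_inner_le_norm _ _
      _ ≤ L * ‖lineMap a b t - a‖ * ‖b - a‖ - L * t * ‖b - a‖ ^ 2 := by
        gcongr; exact hlip _ _
      _ = 0 := by rw [hdist]; ring
  have hanti : AntitoneOn ψ (Icc 0 1) := by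
    refine antitoneOn_of_hasDerivWithinAt_nonpos (convex_Icc 0 1)
      (fun t _ ↦ (hψ' t).continuousAt.continuousWithinAt)
      (fun t _ ↦ (hψ' t).hasDerivWithinAt) ?_
    simpa only [interior_Icc] using hψ'_nonpos
  have := hanti (left_mem_Icc.2 zero_le_one) (right_mem_Icc.2 zero_le_one) zero_le_one
  simp only [ψ, lineMap_apply_zero, lineMap_apply_one] at this
  linarith

end Gradient

theorem strongConvexOn_const_add_inner_add_sq {E : Type*} [NormedAddCommGroup E]
    [InnerProductSpace ℝ E] (c m : ℝ) (v y : E) :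
    StrongConvexOn univ m fun x ↦ c + ⟪v, x - y⟫ + m / 2 * ‖x - y‖ ^ 2 := by
  rw [strongConvexOn_iff_convex]
  have haffine : (fun x ↦ c + ⟪v, x - y⟫ + m / 2 * ‖x - y‖ ^ 2 - m / 2 * ‖x‖ ^ 2) =
      fun x ↦ innerₛₗ ℝ (v - m • y) x + (c - ⟪v, y⟫ + m / 2 * ‖y‖ ^ 2) := by
    ext x
    simp only [innerₛₗ_apply_apply, norm_sub_sq_real, inner_sub_left, inner_sub_right,
      real_inner_smul_left, real_inner_comm x y]
    ring
  rw [haffine]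
  exact ((innerₛₗ ℝ (v - m • y)).convexOn convex_univ).add_const _

theorem add_le_of_forall_le_convex_combo_sub {p q k : ℝ}
    (h : ∀ t ∈ Ioo (0 : ℝ) 1, p ≤ (1 - t) * p + t * q - (1 - t) * t * k) : p + k ≤ q := by
  have hlim : Tendsto (fun t : ℝ ↦ p + (1 - t) * k) (𝓝[>] 0) (𝓝 (p + k)) := by
    have : Continuous fun t : ℝ ↦ p + (1 - t) * k := by fun_prop
    simpa using (this.tendsto 0).mono_left nhdsWithin_le_nhds
  refine le_of_tendsto hlim ?_
  filter_upwards [Ioo_mem_nhdsGT one_pos] with t ht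
  nlinarith [h t ht, ht.1]

theorem EReal.coe_add_le_coe_add_of_le_of_add_le {a c A B : ℝ} {u v : EReal}
    (h : (A : EReal) + u ≤ B + v) (hreal : a + B ≤ A + c) : (a : EReal) + u ≤ c + v := by
  induction u using EReal.rec <;> induction v using EReal.rec <;> try simp at h ⊢
  · norm_cast at h ⊢
    linarith
  · norm_cast at h
    exact (EReal.coe_ne_top _ h).elim

theorem StrongConvexOn.quadratic_growth_at_minimizer {E : Type*} [NormedAddCommGroup E]
    [NormedSpace ℝ E] {Q : E → ℝ} {g : E → EReal} {m : ℝ} (hQ : StrongConvexOn univ m Q)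
    (hg : ∀ x y, ∀ a b : ℝ, 0 ≤ a → 0 ≤ b → a + b = 1 →
      g (a • x + b • y) ≤ (a : EReal) * g x + (b : EReal) * g y)
    {x : E} (hx : ∀ w, (Q x : EReal) + g x ≤ Q w + g w) (z : E) :
    ((Q x + m / 2 * ‖z - x‖ ^ 2 : ℝ) : EReal) + g x ≤ (Q z : EReal) + g z := by
  -- infinite values of `g` either make the claim trivial or contradict the minimality of `x`
  rcases eq_or_ne (g x) ⊥ with hx_bot | hx_bot
  · simp [hx_bot]
  rcases eq_or_ne (g z) ⊤ with hz_top | hz_top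
  · simp [hz_top]
  have hx_top : g x ≠ ⊤ := by
    intro h
    have := hx z
    rw [h, EReal.coe_add_top, top_le_iff] at this
    exact EReal.add_ne_top (EReal.coe_ne_top _) hz_top this
  have hz_bot : g z ≠ ⊥ := by
    intro h
    have := hx z
    rw [h, EReal.add_bot, le_bot_iff, EReal.add_eq_bot_iff] at this
    exact this.elim (EReal.coe_ne_bot _) hx_bot
  obtain ⟨b, hb⟩ : ∃ b : ℝ, g x = b := ⟨_, (EReal.coe_toReal hx_top hx_bot).symm⟩
  obtain ⟨c, hc⟩ : ∃ c : ℝ, g z = c := ⟨_, (EReal.coe_toReal hz_top hz_bot).symm⟩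
  rw [hb, hc]
  norm_cast
  refine add_right_comm (Q x) _ b ▸ add_le_of_forall_le_convex_combo_sub fun t ht ↦ ?_
  set w := (1 - t) • x + t • z
  have h1t : 0 ≤ 1 - t := sub_nonneg.2 ht.2.le
  have hQw := hQ.2 (mem_univ x) (mem_univ z) h1t ht.1.le (sub_add_cancel 1 t)
  have hgw : g w ≤ (((1 - t) * b + t * c : ℝ) : EReal) := by
    simpa [hb, hc] using hg x z (1 - t) t h1t ht.1.le (sub_add_cancel 1 t)
  have hmin : ((Q x + b : ℝ) : EReal) ≤ ((Q w + ((1 - t) * b + t * c) : ℝ) : EReal) := by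
    calc ((Q x + b : ℝ) : EReal) = Q x + g x := by rw [hb]; norm_cast
      _ ≤ Q w + g w := hx w
      _ ≤ _ := by rw [EReal.coe_add]; gcongr
  simp only [smul_eq_mul, norm_sub_rev x z] at hQw
  norm_cast at hmin
  nlinarith

theorem prox_grad_descent_lemma {n : ℕ}
    (f : EuclideanSpace ℝ (Fin n) → ℝ) (f' : EuclideanSpace ℝ (Fin n) → EuclideanSpace ℝ (Fin n))
    (hf : ∀ x, HasGradientAt f (f' x) x)
    (hfconv : ConvexOn ℝ Set.univ f)
    (L : ℝ)
    (hlip : ∀ x y, ‖f' x - f' y‖ ≤ L * ‖x - y‖)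
    (g : EuclideanSpace ℝ (Fin n) → EReal)
    -- `g` is convex:
    (hg_conv : ∀ x y, ∀ a b : ℝ, 0 ≤ a → 0 ≤ b → a + b = 1 →
      g (a • x + b • y) ≤ (a : EReal) * g x + (b : EReal) * g y)
    (Ls : ℝ) (hLs : L ≤ Ls)
    (y xplus : EuclideanSpace ℝ (Fin n))
    -- `x⁺` minimizes the quadratic model
    (hxplus : ∀ x,
      ((f y + ⟪f' y, xplus - y⟫ + Ls / 2 * ‖xplus - y‖ ^ 2 : ℝ) : EReal) + g xplus ≤
        ((f y + ⟪f' y, x - y⟫ + Ls / 2 * ‖x - y‖ ^ 2 : ℝ) : EReal) + g x)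
    (z : EuclideanSpace ℝ (Fin n)) :
    ((f xplus : EReal) + g xplus) +
        ((Ls / 2 * ‖xplus - y‖ ^ 2 + Ls * ⟪y - z, xplus - y⟫ : ℝ) : EReal) ≤
      (f z : EReal) + g z := by
  have hgrowth := (strongConvexOn_const_add_inner_add_sq (f y) Ls (f' y) y)
    |>.quadratic_growth_at_minimizer hg_conv hxplus z
  have hupper : f xplus ≤ f y + ⟪f' y, xplus - y⟫ + Ls / 2 * ‖xplus - y‖ ^ 2 := by
    have := le_add_inner_add_of_lipschitz_gradient hf hlip y xplus
    have : L / 2 * ‖xplus - y‖ ^ 2 ≤ Ls / 2 * ‖xplus - y‖ ^ 2 := by gcongr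
    linarith
  have hlower : f y + ⟪f' y, z - y⟫ ≤ f z := hfconv.add_inner_le_of_hasGradientAt (hf y) z
  have hnorm : ‖z - xplus‖ ^ 2 = ‖z - y‖ ^ 2 + 2 * ⟪y - z, xplus - y⟫ + ‖xplus - y‖ ^ 2 := by
    rw [show z - xplus = (z - y) - (xplus - y) by abel, norm_sub_sq_real, ← neg_sub z y,
      inner_neg_left]
    ring
  rw [add_right_comm, ← EReal.coe_add]
  refine EReal.coe_add_le_coe_add_of_le_of_add_le hgrowth ?_
  linear_combination hupper + hlower - Ls / 2 * hnorm
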